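/- For all integers m ≥ 1 and k ≥ 0, the following identity holds in the ring of formal power series ℚ[[X]]: Σ_{n≥0} h_{n−k}(1, m+1, 2m+1, …, km+1) · X^n/n! = (1/k!) · exp(X) · ((exp(mX) − 1)/m)^k, where h_j = 0 for j < 0, exp denotes the formal exponential series, and exp(mX) is obtained from exp(X) by rescaling X to mX. -/

import Mathlib

/-!
Write `F_k` for the left-hand side and `G_k` for the right-hand side. Appending the node
`c = (k+1)m+1` to the list splits `h_{j+1}` according to whether `c` occurs, which gives
`F_{k+1}' = F_k + c F_{k+1}`. Since `((e^{mX} - 1)/m)' = m (e^{mX} - 1)/m + 1`, the series `G_k`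
satisfy the same recursion. Both `F_{k+1}` and `G_{k+1}` have constant term `0`, and a power series
`H` with `H' = c H` and `H(0) = 0` vanishes; so `F_k = G_k` follows by induction from
`F_0 = G_0 = e^X`.
-/

open Finset

/-- Complete homogeneous symmetric polynomial evaluated at a list of ring elements. -/
def hpoly {R : Type*} [CommSemiring R] : ℕ → List R → R
  | 0, _ => 1
  | _ + 1, [] => 0
  | j + 1, a :: l => hpoly (j + 1) l + a * hpoly j (a :: l)
  termination_by j l => (j, l.length)

section

variable {R : Type*} [CommSemiring R]

@[simp]
lemma hpoly_zero (l : List R) : hpoly 0 l = 1 := by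
  rw [hpoly]

@[simp]
lemma hpoly_succ_nil (j : ℕ) : hpoly (j + 1) ([] : List R) = 0 := by
  rw [hpoly]

lemma hpoly_succ_cons (j : ℕ) (a : R) (l : List R) :
    hpoly (j + 1) (a :: l) = hpoly (j + 1) l + a * hpoly j (a :: l) := by
  rw [hpoly]

lemma hpoly_singleton (a : R) (j : ℕ) : hpoly j [a] = a ^ j := by
  induction j with
  | zero => simp
  | succ j ih => rw [hpoly_succ_cons, ih, hpoly_succ_nil, zero_add, pow_succ']

lemma hpoly_succ_append_singleton (a : R) (j : ℕ) (l : List R) :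
    hpoly (j + 1) (l ++ [a]) = hpoly (j + 1) l + a * hpoly j (l ++ [a]) := by
  induction j generalizing l with
  | zero =>
    induction l with
    | nil => simp [hpoly_succ_cons]
    | cons b l ih => simp only [List.cons_append, hpoly_succ_cons, hpoly_zero, ih]; ring
  | succ j ihj =>
    induction l with
    | nil => simp [hpoly_succ_cons]
    | cons b l ih =>
      have h := ihj (b :: l)
      rw [List.cons_append] at h ⊢
      rw [hpoly_succ_cons, ih, hpoly_succ_cons (j + 1) b l]
      nth_rw 1 [h]
      rw [hpoly_succ_cons j b (l ++ [a])]
      ring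

def stirlingNodes (a : R) (k : ℕ) : List R :=
  (List.range (k + 1)).map fun j : ℕ => (j : R) * a + 1

lemma stirlingNodes_succ (a : R) (k : ℕ) :
    stirlingNodes a (k + 1) = stirlingNodes a k ++ [((k : R) + 1) * a + 1] := by
  simp [stirlingNodes, List.range_succ]

end

namespace PowerSeries

open scoped Nat

lemma derivative_rescale {R : Type*} [CommSemiring R] (a : R) (f : R⟦X⟧) :
    d⁄dX R (rescale a f) = C a * rescale a (d⁄dX R f) := by
  ext n
  simp only [coeff_derivative, coeff_rescale, coeff_C_mul, pow_succ]
  ring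

lemma eq_zero_of_derivative_eq_C_mul {R : Type*} [CommRing R] [IsAddTorsionFree R] {c : R}
    {f : R⟦X⟧} (hd : d⁄dX R f = C c * f) (h0 : constantCoeff f = 0) : f = 0 := by
  ext n
  induction n with
  | zero => simpa using h0
  | succ n ih =>
    rw [map_zero] at ih ⊢
    have h := congrArg (coeff n) hd
    rw [coeff_derivative, coeff_C_mul, ih, mul_zero, ← Nat.cast_succ, mul_comm,
      ← nsmul_eq_mul] at h
    simpa using (smul_eq_zero.mp h).resolve_left n.succ_ne_zero

variable {K : Type*} [Field K]

noncomputable def hpolyEGF (k : ℕ) (l : List K) : K⟦X⟧ :=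
  mk fun n => (if k ≤ n then hpoly (n - k) l else 0) / n !

lemma constantCoeff_hpolyEGF_succ (k : ℕ) (l : List K) :
    constantCoeff (hpolyEGF (k + 1) l) = 0 := by
  rw [← coeff_zero_eq_constantCoeff_apply]
  simp [hpolyEGF]

variable [CharZero K]

lemma derivative_mk_div_factorial (g : ℕ → K) :
    d⁄dX K (mk fun n => g n / n !) = mk fun n => g (n + 1) / n ! := by
  ext n
  have hn : (n ! : K) ≠ 0 := Nat.cast_ne_zero.2 n.factorial_ne_zero
  have hn1 : (n : K) + 1 ≠ 0 := Nat.cast_add_one_ne_zero n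
  rw [coeff_derivative, coeff_mk, coeff_mk, Nat.factorial_succ]
  push_cast
  field_simp

lemma derivative_hpolyEGF_succ_append_singleton (k : ℕ) (l : List K) (a : K) :
    d⁄dX K (hpolyEGF (k + 1) (l ++ [a])) = hpolyEGF k l + C a * hpolyEGF (k + 1) (l ++ [a]) := by
  ext n
  simp only [hpolyEGF, derivative_mk_div_factorial, map_add, coeff_C_mul, coeff_mk,
    ← mul_div_assoc, ← add_div, Nat.add_sub_add_right, add_le_add_iff_right]
  congr 1
  rcases lt_trichotomy n k with hlt | rfl | hgt
  · simp [hlt.not_ge, hlt.le.not_gt]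
  · simp
  · obtain ⟨j, rfl⟩ := Nat.exists_eq_add_of_lt hgt
    simp only [(by omega : k ≤ k + j + 1), (by omega : k + 1 ≤ k + j + 1), if_true,
      (by omega : k + j + 1 - k = j + 1), (by omega : k + j + 1 - (k + 1) = j),
      hpoly_succ_append_singleton]

lemma hpolyEGF_zero_singleton (a : K) : hpolyEGF 0 [a] = rescale a (exp K) := by
  ext n
  simp [hpolyEGF, coeff_rescale, coeff_exp, hpoly_singleton, div_eq_mul_inv]

noncomputable def expSubOneDiv (a : K) : K⟦X⟧ := C (1 / a) * (rescale a (exp K) - 1)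

lemma constantCoeff_expSubOneDiv (a : K) : constantCoeff (expSubOneDiv a) = 0 := by
  have : constantCoeff (rescale a (exp K)) = 1 := by
    rw [← coeff_zero_eq_constantCoeff_apply, coeff_rescale]
    simp
  simp [expSubOneDiv, this]

lemma derivative_expSubOneDiv {a : K} (ha : a ≠ 0) :
    d⁄dX K (expSubOneDiv a) = C a * expSubOneDiv a + 1 := by
  have hCa : C a * C (1 / a) = (1 : K⟦X⟧) := by rw [← map_mul, mul_one_div_cancel ha, map_one]
  simp only [expSubOneDiv, Derivation.leibniz, derivative_C, derivative_rescale, derivative_exp,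
    map_sub, Derivation.map_one_eq_zero, sub_zero, smul_eq_mul]
  linear_combination hCa

noncomputable def stirlingEGF (a : K) (k : ℕ) : K⟦X⟧ :=
  C (1 / (k ! : K)) * exp K * expSubOneDiv a ^ k

lemma constantCoeff_stirlingEGF_succ (a : K) (k : ℕ) :
    constantCoeff (stirlingEGF a (k + 1)) = 0 := by
  simp [stirlingEGF, constantCoeff_expSubOneDiv]

lemma derivative_stirlingEGF_succ {a : K} (ha : a ≠ 0) (k : ℕ) :
    d⁄dX K (stirlingEGF a (k + 1)) =
      stirlingEGF a k + C (((k : K) + 1) * a + 1) * stirlingEGF a (k + 1) := by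
  have hfac : ((k : K) + 1) * (1 / (k + 1) ! : K) = 1 / k ! := by
    have : (k ! : K) ≠ 0 := Nat.cast_ne_zero.2 k.factorial_ne_zero
    push_cast [Nat.factorial_succ]
    field_simp
  simp only [stirlingEGF, Derivation.leibniz, Derivation.leibniz_pow, derivative_C,
    derivative_exp, derivative_expSubOneDiv ha, smul_eq_mul, nsmul_eq_mul,
    Nat.add_sub_cancel, map_add, map_mul, map_one, map_natCast, ← hfac]
  push_cast
  ring

theorem hpolyEGF_stirlingNodes {a : K} (ha : a ≠ 0) (k : ℕ) :
    hpolyEGF k (stirlingNodes a k) = stirlingEGF a k := by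
  induction k with
  | zero => simp [stirlingNodes, stirlingEGF, hpolyEGF_zero_singleton]
  | succ k ih =>
    rw [← sub_eq_zero]
    refine eq_zero_of_derivative_eq_C_mul (c := ((k : K) + 1) * a + 1) ?_ ?_
    · rw [map_sub, stirlingNodes_succ, derivative_hpolyEGF_succ_append_singleton,
        derivative_stirlingEGF_succ ha, ih]
      ring
    · rw [map_sub, constantCoeff_hpolyEGF_succ, constantCoeff_stirlingEGF_succ, sub_zero]

end PowerSeries

/-- for `m ≥ 1` and `k ≥ 0`, in `ℚ[[X]]`,
`Σ_{n≥0} h_{n−k}(1, m+1, 2m+1, …, km+1) · X^n/n! = (1/k!) · e^X · ((e^{mX} − 1)/m)^k`,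
where `h_j = 0` for `j < 0` (hence the `if k ≤ n` guard) and `e^{mX}` is obtained from
`e^X` by rescaling `X` to `mX`. -/
theorem stmt13 (m k : ℕ) (hm : 1 ≤ m) :
    (PowerSeries.mk fun n =>
        (if k ≤ n then
          (hpoly (n - k) ((List.range (k + 1)).map fun j => ((j * m + 1 : ℕ) : ℚ))) /
            (n.factorial : ℚ)
        else 0))
      = PowerSeries.C (1 / (k.factorial : ℚ)) * PowerSeries.exp ℚ *
          (PowerSeries.C (1 / (m : ℚ)) *
            (PowerSeries.rescale (m : ℚ) (PowerSeries.exp ℚ) - 1)) ^ k := by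
  have hm0 : (m : ℚ) ≠ 0 := Nat.cast_ne_zero.2 (by omega)
  have h := PowerSeries.hpolyEGF_stirlingNodes hm0 k
  simp only [PowerSeries.hpolyEGF, stirlingNodes, PowerSeries.stirlingEGF,
    PowerSeries.expSubOneDiv, ite_div, zero_div] at h
  push_cast
  exact h
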